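/- arXiv:1902.06932 — 6 statements merged into one kernel-verified Lean document; each statement's English description precedes it below -/
import Mathlib

section
/- Let G be a finite group, N a normal subgroup of G, and S a symmetric generating set of G containing the identity (e ∈ S = S⁻¹). If d is the diameter of the Cayley graph of the quotient G/N with respect to the image of S, then S^{2d+1} ∩ N generates N. -/
open Pointwise

/-!
Pick, in every right coset of `N`, a representative of word length at most `d`. Any
`n ∈ N ∩ S^k` is peeled letter by letter: if `u ∈ S^d` is the current prefix and `s ∈ S` the
next letter, let `r ∈ S^d` represent `N u s`; then `u s r⁻¹ ∈ S^(2d+1) ∩ N`, and `r` becomes the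
new prefix of the remaining word, which is one letter shorter and still lies in `N`.
-/

namespace Set

variable {G : Type*} [Group G]

lemma exists_mem_pow_of_mem_closure {S : Set G} (hS : S⁻¹ = S) {g : G}
    (hg : g ∈ Subgroup.closure S) : ∃ k : ℕ, g ∈ S ^ k := by
  induction hg using Subgroup.closure_induction with
  | mem x hx => exact ⟨1, by rwa [pow_one]⟩
  | one => exact ⟨0, by rw [pow_zero]; rfl⟩
  | mul x y _ _ hx hy =>
    obtain ⟨a, ha⟩ := hx
    obtain ⟨b, hb⟩ := hy
    exact ⟨a + b, pow_add S a b ▸ mul_mem_mul ha hb⟩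
  | inv x _ hx =>
    obtain ⟨k, hk⟩ := hx
    exact ⟨k, by rwa [← inv_mem_inv, ← inv_pow, hS, inv_inv]⟩

end Set

namespace Subgroup

variable {G : Type*} [Group G] {N : Subgroup G} {A S : Set G}

lemma mul_mem_closure_mul_mul_inv_inter (hS1 : 1 ∈ S) (hA1 : 1 ∈ A)
    (hA : ∀ g, ∃ r ∈ A, g * r⁻¹ ∈ N) (k : ℕ) {u m : G} (hu : u ∈ A) (hm : m ∈ S ^ k)
    (hum : u * m ∈ N) : u * m ∈ closure (A * S * A⁻¹ ∩ N) := by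
  induction k generalizing u m with
  | zero =>
    rw [pow_zero, Set.mem_one] at hm
    subst hm
    refine subset_closure ⟨?_, hum⟩
    simpa using Set.mul_mem_mul (Set.mul_mem_mul hu hS1) (Set.inv_mem_inv.2 hA1)
  | succ k ih =>
    rw [pow_succ', Set.mem_mul] at hm
    obtain ⟨s, hs, m, hm, rfl⟩ := hm
    obtain ⟨r, hr, hrN⟩ := hA (u * s)
    have hgen : u * s * r⁻¹ ∈ closure (A * S * A⁻¹ ∩ N) :=
      subset_closure ⟨Set.mul_mem_mul (Set.mul_mem_mul hu hs) (Set.inv_mem_inv.2 hr), hrN⟩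
    have hsplit : u * (s * m) = u * s * r⁻¹ * (r * m) := by group
    have hrmN : r * m ∈ N := by
      have : r * m = (u * s * r⁻¹)⁻¹ * (u * (s * m)) := by group
      exact this ▸ N.mul_mem (N.inv_mem hrN) hum
    rw [hsplit]
    exact mul_mem hgen (ih hr hm hrmN)

theorem closure_mul_mul_inv_inter_eq (hS1 : 1 ∈ S) (hSsymm : S⁻¹ = S)
    (hS : closure S = ⊤) (hA1 : 1 ∈ A) (hA : ∀ g, ∃ r ∈ A, g * r⁻¹ ∈ N) :
    closure (A * S * A⁻¹ ∩ N) = N := by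
  refine le_antisymm ((closure_le N).2 Set.inter_subset_right) fun n hn => ?_
  obtain ⟨k, hk⟩ := Set.exists_mem_pow_of_mem_closure hSsymm (hS ▸ mem_top n)
  simpa using mul_mem_closure_mul_mul_inv_inter hS1 hA1 hA k hA1 hk (by simpa using hn)

end Subgroup

theorem schreier_lemma_general {G : Type*} [Group G] (N : Subgroup G) [N.Normal]
    (S : Set G) (h1 : (1 : G) ∈ S) (hsymm : S⁻¹ = S)
    (hgen : Subgroup.closure S = ⊤) (d : ℕ)
    (hd : ((QuotientGroup.mk '' S : Set (G ⧸ N))) ^ d = Set.univ) :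
    Subgroup.closure (S ^ (2 * d + 1) ∩ (N : Set G)) = N := by
  have hrep : ∀ g, ∃ r ∈ S ^ d, g * r⁻¹ ∈ N := by
    intro g
    have hg : (g : G ⧸ N) ∈ QuotientGroup.mk' N '' (S ^ d) := by
      rw [Set.image_pow]
      exact hd ▸ Set.mem_univ _
    obtain ⟨r, hr, hrg⟩ := hg
    exact ⟨r, hr, div_eq_mul_inv g r ▸ QuotientGroup.eq_iff_div_mem.1 hrg.symm⟩
  have hword : S ^ d * S * (S ^ d)⁻¹ = S ^ (2 * d + 1) := by
    rw [← inv_pow, hsymm, ← pow_succ, ← pow_add]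
    congr 1
    omega
  rw [← hword]
  exact Subgroup.closure_mul_mul_inv_inter_eq h1 hsymm hgen (Set.one_mem_pow h1) hrep

/-- Schreier's lemma: if `S` is a symmetric generating set of the finite group `G`
containing the identity, `N ⊴ G`, and the image of `S` in `G/N` reaches everything in
`d` steps (`d` = diameter of the quotient Cayley graph), then `S^(2d+1) ∩ N` generates `N`. -/
theorem schreier_lemma {G : Type*} [Group G] [Finite G] (N : Subgroup G) [N.Normal]
    (S : Set G) (h1 : (1 : G) ∈ S) (hsymm : S⁻¹ = S)
    (hgen : Subgroup.closure S = ⊤) (d : ℕ)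
    (hd : ((QuotientGroup.mk '' S : Set (G ⧸ N))) ^ d = Set.univ) :
    Subgroup.closure (S ^ (2 * d + 1) ∩ (N : Set G)) = N :=
  schreier_lemma_general N S h1 hsymm hgen d hd
end

section
/- For every n ≥ 1, the sum over i = 1 to n−1 of 4^{⌈log₂ i⌉} is strictly less than (196/243)·n³. -/
/-! On each dyadic block `(2^m, 2^(m+1)]` the summand is the constant `4^(m+1)`, so the sum up to
`2^m` is the geometric sum `(4·8^m + 3)/7`, and for `2^m ≤ N ≤ 2^(m+1)` the sum up to `N` is
`(4a³ + 3)/7 + 4a²(N - a)` with `a = 2^m`. Compared with `(196/243)(N+1)³`, the difference is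
`(196/243)(y - 9a/7)²(y + 18a/7) + 4a² - 3/7` with `y = N + 1`, which is positive. The constant
`196/243` is optimal: it makes `y = 9a/7` a double root of the cubic part. -/

open Finset

lemma Nat.Icc_one_eq_Ioc_zero (N : ℕ) : Icc 1 N = Ioc 0 N := rfl

lemma Nat.clog_eq_succ_of_pow_lt_of_le {b m i : ℕ} (hb : 1 < b) (h₁ : b ^ m < i)
    (h₂ : i ≤ b ^ (m + 1)) : Nat.clog b i = m + 1 :=
  le_antisymm ((Nat.clog_le_iff_le_pow hb).mpr h₂) ((Nat.lt_clog_iff_pow_lt hb).mpr h₁)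

lemma sum_Ioc_pow_four_clog {m N : ℕ} (hN : N ≤ 2 ^ (m + 1)) :
    ∑ i ∈ Ioc (2 ^ m) N, (4 : ℝ) ^ Nat.clog 2 i
      = ((N - 2 ^ m : ℕ) : ℝ) * 4 ^ (m + 1) := by
  have hconst : ∀ i ∈ Ioc (2 ^ m) N, (4 : ℝ) ^ Nat.clog 2 i = 4 ^ (m + 1) := fun i hi => by
    rw [mem_Ioc] at hi
    rw [Nat.clog_eq_succ_of_pow_lt_of_le one_lt_two hi.1 (hi.2.trans hN)]
  rw [sum_congr rfl hconst, sum_const, Nat.card_Ioc, nsmul_eq_mul]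

lemma sum_Icc_pow_four_clog_two_pow (m : ℕ) :
    ∑ i ∈ Icc 1 (2 ^ m), (4 : ℝ) ^ Nat.clog 2 i = (4 * 8 ^ m + 3) / 7 := by
  induction m with
  | zero => norm_num
  | succ m ih =>
    rw [Nat.Icc_one_eq_Ioc_zero] at ih ⊢
    rw [← sum_Ioc_consecutive _ (Nat.zero_le (2 ^ m)) (Nat.pow_le_pow_right two_pos m.le_succ),
      ih, sum_Ioc_pow_four_clog le_rfl, pow_succ 2 m, Nat.mul_two, Nat.add_sub_cancel]
    have h8 : (8 : ℝ) ^ m = 2 ^ m * 4 ^ m := by rw [← mul_pow]; norm_num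
    push_cast
    rw [pow_succ, pow_succ, h8]
    ring

lemma sum_Icc_pow_four_clog {m N : ℕ} (h₁ : 2 ^ m ≤ N) (h₂ : N ≤ 2 ^ (m + 1)) :
    ∑ i ∈ Icc 1 N, (4 : ℝ) ^ Nat.clog 2 i
      = (4 * ((2 : ℝ) ^ m) ^ 3 + 3) / 7 + (N - 2 ^ m) * (4 * ((2 : ℝ) ^ m) ^ 2) := by
  rw [Nat.Icc_one_eq_Ioc_zero, ← sum_Ioc_consecutive _ (Nat.zero_le _) h₁,
    ← Nat.Icc_one_eq_Ioc_zero, sum_Icc_pow_four_clog_two_pow, sum_Ioc_pow_four_clog h₂,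
    Nat.cast_sub h₁]
  have h8 : (8 : ℝ) ^ m = ((2 : ℝ) ^ m) ^ 3 := by rw [← pow_mul, mul_comm, pow_mul]; norm_num
  have h4 : (4 : ℝ) ^ m = ((2 : ℝ) ^ m) ^ 2 := by rw [← pow_mul, mul_comm, pow_mul]; norm_num
  rw [pow_succ, h8, h4]
  push_cast
  ring

lemma clog_sum_closed_form_lt {a x : ℝ} (ha : 1 ≤ a) (hx : 0 ≤ x) :
    (4 * a ^ 3 + 3) / 7 + (x - a) * (4 * a ^ 2) < 196 / 243 * (x + 1) ^ 3 := by
  have hsplit : 196 / 243 * (x + 1) ^ 3 - ((4 * a ^ 3 + 3) / 7 + (x - a) * (4 * a ^ 2))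
      = 196 / 243 * (x + 1 - 9 * a / 7) ^ 2 * (x + 1 + 18 * a / 7) + (4 * a ^ 2 - 3 / 7) := by
    ring
  have hcubic : 0 ≤ 196 / 243 * (x + 1 - 9 * a / 7) ^ 2 * (x + 1 + 18 * a / 7) := by
    have : 0 ≤ x + 1 + 18 * a / 7 := by linarith
    positivity
  have ha2 : 1 ≤ a ^ 2 := one_le_pow₀ ha
  linarith

/-- `∑_{i=1}^{n-1} 4^{⌈log₂ i⌉} < (196/243) n³` for every `n ≥ 1`. -/
theorem sum_pow_four_clog_lt (n : ℕ) (hn : 1 ≤ n) :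
    ∑ i ∈ Finset.Icc 1 (n - 1), (4 : ℝ) ^ (Nat.clog 2 i) < 196 / 243 * (n : ℝ) ^ 3 := by
  obtain ⟨N, rfl⟩ : ∃ N, n = N + 1 := ⟨n - 1, by omega⟩
  rw [Nat.add_sub_cancel, Nat.cast_succ]
  rcases Nat.eq_zero_or_pos N with rfl | hN
  · norm_num
  have h₁ : 2 ^ Nat.log 2 N ≤ N := Nat.pow_log_le_self 2 hN.ne'
  have h₂ : N ≤ 2 ^ (Nat.log 2 N + 1) := (Nat.lt_pow_succ_log_self one_lt_two N).le
  rw [sum_Icc_pow_four_clog h₁ h₂]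
  exact clog_sum_closed_form_lt (one_le_pow₀ one_le_two) N.cast_nonneg
end

section
/- For any s ≥ 1 and any distinct primes p₁ < ... < p_s, the sum ∑_{i=1}^{s} ∏_{j=i+1}^{s} (1/p_j) is at most 4/3. -/
open Finset

lemma aux_recursion (s : ℕ) :
    ∑ i ∈ Finset.range (s+1), ∏ j ∈ Finset.Ico (i+1) (s+1), (1 : ℝ) / (j + 2)
      = (∑ i ∈ Finset.range s, ∏ j ∈ Finset.Ico (i+1) s, (1 : ℝ) / (j + 2)) * (1 / (s + 2)) + 1 := by
  rw [Finset.sum_range_succ, Finset.Ico_self, Finset.prod_empty, Finset.sum_mul]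
  have h : ∀ i ∈ Finset.range s, ∏ j ∈ Finset.Ico (i+1) (s+1), (1 : ℝ) / (j + 2)
      = (∏ j ∈ Finset.Ico (i+1) s, (1 : ℝ) / (j + 2)) * (1 / (s + 2)) := by
    intro i hi
    rw [Finset.mem_range] at hi
    rw [Finset.prod_Ico_succ_top (by omega : i + 1 ≤ s)]
  rw [Finset.sum_congr rfl h]

lemma aux_bound (s : ℕ) (hs : 2 ≤ s) :
    ∑ i ∈ Finset.range s, ∏ j ∈ Finset.Ico (i+1) s, (1 : ℝ) / (j + 2) ≤ 4 / 3 := by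
  induction s, hs using Nat.le_induction with
  | base =>
    norm_num [Finset.sum_range_succ]
  | succ n hn ih =>
    rw [aux_recursion]
    have h2 : (1:ℝ) / (n + 2) ≤ 1 / 4 := by
      apply div_le_div_of_nonneg_left (by norm_num) (by norm_num)
      have : (2:ℝ) ≤ n := by exact_mod_cast hn
      linarith
    have h3 : (0:ℝ) ≤ 1 / ((n:ℝ) + 2) := by positivity
    nlinarith [mul_le_mul ih h2 h3 (by norm_num : (0:ℝ) ≤ 4/3)]

/-- For distinct primes `p₁ < ⋯ < p_s` (`s ≥ 1`),
`∑_{i=1}^{s} ∏_{j=i+1}^{s} 1/p_j ≤ 4/3`. -/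
theorem sum_prod_inv_primes_le (s : ℕ) (hs : 1 ≤ s) (p : Fin s → ℕ)
    (hp : ∀ j, (p j).Prime) (hmono : StrictMono p) :
    ∑ i : Fin s, ∏ j ∈ Finset.univ.filter (fun j => i < j), (1 : ℝ) / (p j : ℝ) ≤ 4 / 3 := by
  -- p j ≥ j + 2
  have key : ∀ n : ℕ, ∀ h : n < s, n + 2 ≤ p ⟨n, h⟩ := by
    intro n
    induction n with
    | zero => intro h; simpa using (hp ⟨0, h⟩).two_le
    | succ k ih =>
      intro h
      have hk : k < s := by omega
      have h1 := ih hk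
      have h2 : p ⟨k, hk⟩ < p ⟨k+1, h⟩ := hmono (by simp [Fin.lt_def])
      omega
  have hpge : ∀ j : Fin s, (j : ℕ) + 2 ≤ p j := fun j => key j.val j.isLt
  -- bound each term
  have step1 : ∑ i : Fin s, ∏ j ∈ Finset.univ.filter (fun j => i < j), (1 : ℝ) / (p j : ℝ)
      ≤ ∑ i : Fin s, ∏ j ∈ Finset.univ.filter (fun j => i < j), (1 : ℝ) / ((j : ℕ) + 2) := by
    apply Finset.sum_le_sum
    intro i _
    apply Finset.prod_le_prod
    · intro j _; positivity
    · intro j _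
      apply div_le_div_of_nonneg_left (by norm_num) (by positivity)
      exact_mod_cast hpge j
  refine step1.trans ?_
  -- convert to range/Ico sums
  have step2 : ∑ i : Fin s, ∏ j ∈ Finset.univ.filter (fun j => i < j), (1 : ℝ) / ((j : ℕ) + 2)
      = ∑ i ∈ Finset.range s, ∏ j ∈ Finset.Ico (i+1) s, (1 : ℝ) / (j + 2) := by
    rw [Finset.sum_range fun i => ∏ j ∈ Finset.Ico (i+1) s, (1 : ℝ) / (j + 2)]
    apply Finset.sum_congr rfl
    intro i _
    have himg : (Finset.univ.filter (fun j => i < j)).map ⟨Fin.val, Fin.val_injective⟩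
        = Finset.Ico ((i : ℕ) + 1) s := by
      ext a
      simp only [Finset.mem_map, Finset.mem_filter, Finset.mem_univ, true_and,
        Function.Embedding.coeFn_mk, Finset.mem_Ico]
      constructor
      · rintro ⟨b, hb, rfl⟩
        exact ⟨Fin.lt_def.mp hb, b.isLt⟩
      · rintro ⟨h1, h2⟩
        exact ⟨⟨a, h2⟩, Fin.lt_def.mpr (by simp only [Fin.val_mk]; omega), rfl⟩
    rw [← himg, Finset.prod_map]
    rfl
  rw [step2]
  rcases Nat.eq_or_lt_of_le hs with h1 | h2
  · subst h1
    norm_num [Finset.sum_range_succ]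
  · exact aux_bound s h2
end

section
/- Let G = ∏_{j=1}^{s} (ℤ/p_jℤ)^{e_j} where the p_j are distinct primes and e_j ≥ 1. Then the diameter of G with respect to any symmetric generating set containing the identity is strictly less than (2/3)·max{e_j : 1 ≤ j ≤ s}·∏_{j=1}^{s} p_j. -/
open Pointwise

/-! Fix the coordinates one prime at a time, in increasing order of the primes. Once the
components at the primes of a set `L` are right, the component at the next prime `p` is corrected by
`R • ∑ cᵢ • bᵢ`, where `R = ∏_{q ∈ L} q` is invertible mod `p` and kills the components already
fixed, the `bᵢ ∈ S` are at most `e` elements whose `p`-components span, and `|cᵢ| ≤ ⌊p/2⌋`.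
This costs `e · R · ⌊p/2⌋` elements of `S`. For odd `p` we have `2 R ⌊p/2⌋ = R p - R`, so the
costs telescope to at most `max e · ∏ p / 2`; the prime `2`, if present, comes first. -/

/-- `sumSet S k` is the set of sums of exactly `k` elements of `S`
(sums of at most `k` elements when `0 ∈ S`). -/
def sumSet {G : Type*} [AddGroup G] (S : Set G) : ℕ → Set G
  | 0 => {0}
  | k + 1 => sumSet S k + S

theorem sumSet_eq_nsmul {G : Type*} [AddGroup G] (S : Set G) (k : ℕ) : sumSet S k = k • S := by
  induction k with
  | zero => rfl
  | succ k ih => rw [sumSet, ih, succ_nsmul]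

namespace Set

variable {G : Type*} [AddCommGroup G] {S : Set G}

theorem zsmul_mem_natAbs_nsmul (hsymm : -S = S) {g : G} (hg : g ∈ S) (c : ℤ) :
    c • g ∈ c.natAbs • S := by
  obtain ⟨n, rfl | rfl⟩ := Int.eq_nat_or_neg c
  · simpa using nsmul_mem_nsmul hg
  · have hng : -g ∈ S := hsymm ▸ neg_mem_neg.mpr hg
    simpa using nsmul_mem_nsmul hng

theorem sum_zsmul_mem_nsmul (h0 : (0 : G) ∈ S) (hsymm : -S = S) {κ : Type*} [Fintype κ]
    {b : κ → G} (hb : ∀ k, b k ∈ S) {d : κ → ℤ} {m : ℕ} (hd : ∀ k, (d k).natAbs ≤ m) :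
    ∑ k, d k • b k ∈ (Fintype.card κ * m) • S := by
  rw [mul_nsmul', ← Finset.card_univ, ← Finset.sum_const]
  exact finsetSum_mem_finsetSum _ _ _ fun k _ =>
    Set.nsmul_right_monotone h0 (hd k) (zsmul_mem_natAbs_nsmul hsymm (hb k) (d k))

end Set

theorem Submodule.span_image_eq_top_of_closure_eq_top {G K V : Type*} [AddGroup G] [Ring K]
    [AddCommGroup V] [Module K V] {S : Set G} (hS : AddSubgroup.closure S = ⊤) {f : G →+ V}
    (hf : Function.Surjective f) : Submodule.span K (f '' S) = ⊤ := by
  have hclosure : AddSubgroup.closure (f '' S) = ⊤ := by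
    rw [← AddMonoidHom.map_closure, hS, AddSubgroup.map_top_of_surjective f hf]
  rw [eq_top_iff]
  intro v _
  exact (AddSubgroup.closure_le (Submodule.span K (f '' S)).toAddSubgroup).mpr
    Submodule.subset_span (hclosure ▸ AddSubgroup.mem_top v)

universe u

theorem exists_mem_card_le_finrank_span_eq_top {G : Type u} {K V : Type*} [AddGroup G] [Field K]
    [AddCommGroup V] [Module K V] [FiniteDimensional K V] {S : Set G}
    (hS : AddSubgroup.closure S = ⊤) {f : G →+ V} (hf : Function.Surjective f) :
    ∃ (κ : Type u) (_ : Fintype κ) (b : κ → G), (∀ k, b k ∈ S) ∧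
      Fintype.card κ ≤ Module.finrank K V ∧ Submodule.span K (Set.range (f ∘ b)) = ⊤ := by
  obtain ⟨κ, b, -, hspan, hli⟩ : ∃ (κ : Type u) (b : κ → S), _ :=
    exists_linearIndependent' K (fun g : S => f g)
  have := hli.finite
  have := Fintype.ofFinite κ
  refine ⟨κ, this, fun k => b k, fun k => (b k).2, hli.fintype_card_le_finrank, ?_⟩
  rw [← Submodule.span_image_eq_top_of_closure_eq_top hS hf (K := K), Set.image_eq_range]
  exact hspan

theorem ZMod.nsmul_eq_zero_of_dvd {n m : ℕ} {M : Type*} [AddCommGroup M] [Module (ZMod n) M]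
    (h : n ∣ m) (x : M) : m • x = 0 := by
  rw [← Nat.cast_smul_eq_nsmul (ZMod n), (ZMod.natCast_eq_zero_iff m n).mpr h, zero_smul]

section PrimeComponents

variable {ι : Type*} {p : ι → ℕ} [hp : ∀ i, Fact (p i).Prime]

theorem natCast_prod_ne_zero_of_notMem (hinj : Function.Injective p) {L : Finset ι} {a : ι}
    (ha : a ∉ L) : ((∏ j ∈ L, p j : ℕ) : ZMod (p a)) ≠ 0 := by
  rw [Ne, ZMod.natCast_eq_zero_iff]
  refine (hp a).out.coprime_iff_not_dvd.mp (Nat.Coprime.prod_right fun j hj => ?_)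
  exact (Nat.coprime_primes (hp a).out (hp j).out).mpr fun h => ha (hinj h ▸ hj)

variable {V : ι → Type*} [∀ i, AddCommGroup (V i)] [∀ i, Module (ZMod (p i)) (V i)]
  {S : Set (∀ i, V i)}

theorem exists_mem_nsmul_apply_eq_of_notMem (hinj : Function.Injective p) (h0 : 0 ∈ S)
    (hsymm : -S = S) (hgen : AddSubgroup.closure S = ⊤) {L : Finset ι} {a : ι}
    [FiniteDimensional (ZMod (p a)) (V a)] (ha : a ∉ L) (v : V a) :
    ∃ z ∈ (Module.finrank (ZMod (p a)) (V a) * ((∏ j ∈ L, p j) * (p a / 2))) • S,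
      z a = v ∧ ∀ j ∈ L, z j = 0 := by
  obtain ⟨κ, _, b, hbS, hcard, hspan⟩ := exists_mem_card_le_finrank_span_eq_top (K := ZMod (p a))
    hgen (f := Pi.evalAddMonoidHom V a) (Function.surjective_eval a)
  set R := ∏ j ∈ L, p j
  have hR : (R : ZMod (p a)) ≠ 0 := natCast_prod_ne_zero_of_notMem hinj ha
  obtain ⟨c, hc⟩ := (Submodule.mem_span_range_iff_exists_fun (ZMod (p a))).mp
    (hspan ▸ Submodule.mem_top : (R : ZMod (p a))⁻¹ • v ∈ _)
  have hsum := Set.sum_zsmul_mem_nsmul h0 hsymm hbS fun k => ZMod.natAbs_valMinAbs_le (c k)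
  refine ⟨R • ∑ k, (c k).valMinAbs • b k, ?_, ?_, fun j hj => ?_⟩
  · refine Set.nsmul_right_monotone h0 ?_ (mul_nsmul' S R _ ▸ Set.nsmul_mem_nsmul hsum)
    rw [mul_left_comm]
    gcongr
  · simp only [Pi.smul_apply, Finset.sum_apply]
    rw [← Nat.cast_smul_eq_nsmul (ZMod (p a))]
    simp only [← Int.cast_smul_eq_zsmul (ZMod (p a)), ZMod.coe_valMinAbs]
    exact (congrArg _ hc).trans (smul_inv_smul₀ hR v)
  · exact ZMod.nsmul_eq_zero_of_dvd (Finset.dvd_prod_of_mem p hj) _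

theorem exists_mem_nsmul_eq_on_insert [DecidableEq ι] (hinj : Function.Injective p)
    (h0 : 0 ∈ S) (hsymm : -S = S) (hgen : AddSubgroup.closure S = ⊤) {L : Finset ι} {a : ι}
    [FiniteDimensional (ZMod (p a)) (V a)] (ha : a ∉ L) {k : ℕ}
    (hk : ∀ x : ∀ i, V i, ∃ y ∈ k • S, ∀ j ∈ L, y j = x j) (x : ∀ i, V i) :
    ∃ y ∈ (k + Module.finrank (ZMod (p a)) (V a) * ((∏ j ∈ L, p j) * (p a / 2))) • S,
      ∀ j ∈ insert a L, y j = x j := by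
  obtain ⟨y, hy, hyx⟩ := hk x
  obtain ⟨z, hz, hza, hzL⟩ := exists_mem_nsmul_apply_eq_of_notMem hinj h0 hsymm hgen ha (x a - y a)
  refine ⟨y + z, add_nsmul S _ _ ▸ Set.add_mem_add hy hz, fun j hj => ?_⟩
  rcases Finset.mem_insert.mp hj with rfl | hj
  · simp [hza]
  · simp [hyx j hj, hzL j hj]

theorem exists_mem_nsmul_eq_on_of_finrank_le [DecidableEq ι] (hinj : Function.Injective p)
    (h0 : 0 ∈ S) (hsymm : -S = S) (hgen : AddSubgroup.closure S = ⊤)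
    [∀ i, FiniteDimensional (ZMod (p i)) (V i)] {M : ℕ}
    (hM : ∀ i, Module.finrank (ZMod (p i)) (V i) ≤ M) (L : Finset ι) :
    ∃ k, 2 * k ≤ M * ∏ j ∈ L, p j ∧ ∀ x : ∀ i, V i, ∃ y ∈ k • S, ∀ j ∈ L, y j = x j := by
  induction L using Finset.induction_on_max_value p with
  | empty => exact ⟨0, by simp, fun x => ⟨0, Set.zero_mem_nsmul h0, by simp⟩⟩
  | insert a L ha hmax ih =>
    obtain ⟨k, hk2, hk⟩ := ih
    rcases (hp a).out.eq_two_or_odd' with h2 | hodd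
    · have hL : L = ∅ := Finset.eq_empty_of_forall_notMem fun j hj => by
        have := (hp j).out.two_le
        have := hmax j hj
        have : p j ≠ p a := fun h => ha (hinj h ▸ hj)
        omega
      subst hL
      refine ⟨_, ?_, exists_mem_nsmul_eq_on_insert hinj h0 hsymm hgen ha (k := 0)
        fun x => ⟨0, Set.zero_mem_nsmul h0, by simp⟩⟩
      simp only [Finset.prod_empty, insert_empty_eq, Finset.prod_singleton, h2]
      have := hM a
      omega
    · refine ⟨_, ?_, exists_mem_nsmul_eq_on_insert hinj h0 hsymm hgen ha hk⟩
      obtain ⟨q, hq⟩ := hodd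
      have hpq : p a / 2 = q := by omega
      rw [Finset.prod_insert ha, hpq]
      have hf := Nat.mul_le_mul_right ((∏ j ∈ L, p j) * q) (hM a)
      generalize Module.finrank (ZMod (p a)) (V a) = f at hf ⊢
      rw [hq]
      nlinarith

end PrimeComponents

/-- The diameter of `∏_j (ℤ/p_jℤ)^{e_j}` (distinct primes `p_j`, `e_j ≥ 1`) with respect to
any symmetric generating set containing `0` is `< (2/3)·max_j e_j·∏_j p_j`. -/
theorem diameter_abelian_product (s : ℕ) (hs : 1 ≤ s) (p e : Fin s → ℕ)
    (hp : ∀ j, (p j).Prime) (hpdist : Function.Injective p) (he : ∀ j, 1 ≤ e j)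
    (S : Set (∀ j : Fin s, Fin (e j) → ZMod (p j)))
    (h0 : (0 : ∀ j : Fin s, Fin (e j) → ZMod (p j)) ∈ S) (hsymm : -S = S)
    (hgen : AddSubgroup.closure S = ⊤) :
    ∃ k : ℕ, sumSet S k = Set.univ ∧
      (k : ℝ) < 2 / 3 * ((Finset.univ.sup e : ℕ) : ℝ) * ∏ j : Fin s, (p j : ℝ) := by
  have := fun j => Fact.mk (hp j)
  set M := Finset.univ.sup e
  have hM : ∀ j, Module.finrank (ZMod (p j)) (Fin (e j) → ZMod (p j)) ≤ M := fun j => by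
    simpa using Finset.le_sup (f := e) (Finset.mem_univ j)
  obtain ⟨k, hk, hcov⟩ := exists_mem_nsmul_eq_on_of_finrank_le hpdist h0 hsymm hgen hM Finset.univ
  refine ⟨k, Set.eq_univ_of_forall fun x => ?_, ?_⟩
  · obtain ⟨y, hy, hyx⟩ := hcov x
    rw [sumSet_eq_nsmul, ← funext fun j => hyx j (Finset.mem_univ j)]
    exact hy
  · have hM1 : 1 ≤ M := (he ⟨0, hs⟩).trans (Finset.le_sup (Finset.mem_univ _))
    have hP : 0 < ∏ j, p j := Finset.prod_pos fun j _ => (hp j).pos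
    have hk' : (2 * k : ℝ) ≤ M * ∏ j, (p j : ℝ) := by exact_mod_cast hk
    have hMP : (0 : ℝ) < M * ∏ j, (p j : ℝ) := by exact_mod_cast Nat.mul_pos hM1 hP
    linarith
end

section
/- Let G be a finite group that is a direct product G = ∏ T_i = T₁ × T₂ × ..., with projections ρ_i onto the direct factors T_i, and let X₁, X₂ ⊆ G. Suppose ρ_i(X₁) = ρ_i(X₂) = T_i for a fixed index i where T_i is nonabelian simple, ρ_j(X₁) = {e} for all j in an index set I₁, and ρ_j(X₂) = {e} for all j in an index set I₂. Then the set X = {[x₁,x₂] : x₁ ∈ X₁, x₂ ∈ X₂} satisfies ρ_i(X) = T_i and ρ_j(X) = {e} for all j ∈ I₁ ∪ I₂. -/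
open scoped commutatorElement

/-- In a direct product `G = ∏ T_k`, if `X₁, X₂` both project onto the nonabelian simple
factor `T_i` (in which every element is a commutator, by Ore's conjecture), and project
trivially onto the coordinates in `I₁` resp. `I₂`, then the set of commutators
`X = {[x₁,x₂]}` projects onto `T_i` and trivially onto all coordinates in `I₁ ∪ I₂`. -/
theorem commutator_set_projections {n : ℕ} (T : Fin n → Type*) [∀ k, Group (T k)]
    [∀ k, Finite (T k)] (X₁ X₂ : Set (∀ k, T k)) (i : Fin n)
    [IsSimpleGroup (T i)] (hna : ∃ a b : T i, a * b ≠ b * a)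
    (hOre : ∀ t : T i, ∃ a b : T i, t = ⁅a, b⁆)
    (I₁ I₂ : Set (Fin n)) (hi₁ : i ∉ I₁) (hi₂ : i ∉ I₂)
    (hX₁i : (fun g => g i) '' X₁ = Set.univ) (hX₂i : (fun g => g i) '' X₂ = Set.univ)
    (hX₁ : ∀ j ∈ I₁, (fun g => g j) '' X₁ = {1}) (hX₂ : ∀ j ∈ I₂, (fun g => g j) '' X₂ = {1}) :
    (fun g => g i) '' {z | ∃ x₁ ∈ X₁, ∃ x₂ ∈ X₂, z = ⁅x₁, x₂⁆} = Set.univ ∧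
      ∀ j ∈ I₁ ∪ I₂, (fun g => g j) '' {z | ∃ x₁ ∈ X₁, ∃ x₂ ∈ X₂, z = ⁅x₁, x₂⁆} = {1} := by
  have key : ∀ (x₁ x₂ : ∀ k, T k) (j : Fin n), ⁅x₁, x₂⁆ j = ⁅x₁ j, x₂ j⁆ := by
    intro x₁ x₂ j; rfl
  constructor
  · ext t
    simp only [Set.mem_univ, iff_true, Set.mem_image]
    obtain ⟨a, b, hab⟩ := hOre t
    have ha : a ∈ (fun g => g i) '' X₁ := by rw [hX₁i]; trivial
    have hb : b ∈ (fun g => g i) '' X₂ := by rw [hX₂i]; trivial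
    obtain ⟨x₁, hx₁, hx₁i⟩ := ha
    obtain ⟨x₂, hx₂, hx₂i⟩ := hb
    exact ⟨⁅x₁, x₂⁆, ⟨x₁, hx₁, x₂, hx₂, rfl⟩, by rw [key, show x₁ i = a from hx₁i, show x₂ i = b from hx₂i, hab]⟩
  · intro j hj
    have hne₁ : X₁.Nonempty := by
      rcases Set.eq_univ_iff_forall.mp hX₁i 1 with ⟨x, hx, -⟩; exact ⟨x, hx⟩
    have hne₂ : X₂.Nonempty := by
      rcases Set.eq_univ_iff_forall.mp hX₂i 1 with ⟨x, hx, -⟩; exact ⟨x, hx⟩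
    ext t
    simp only [Set.mem_image, Set.mem_singleton_iff, Set.mem_setOf_eq]
    constructor
    · rintro ⟨z, ⟨x₁, hx₁, x₂, hx₂, rfl⟩, rfl⟩
      rcases hj with hj | hj
      · have h1 : x₁ j ∈ (fun g => g j) '' X₁ := ⟨x₁, hx₁, rfl⟩
        rw [hX₁ j hj] at h1
        rw [Set.mem_singleton_iff] at h1; simp [commutatorElement_def, h1]
      · have h1 : x₂ j ∈ (fun g => g j) '' X₂ := ⟨x₂, hx₂, rfl⟩
        rw [hX₂ j hj] at h1
        rw [Set.mem_singleton_iff] at h1; simp [commutatorElement_def, h1]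
    · rintro rfl
      obtain ⟨x₁, hx₁⟩ := hne₁
      obtain ⟨x₂, hx₂⟩ := hne₂
      refine ⟨⁅x₁, x₂⁆, ⟨x₁, hx₁, x₂, hx₂, rfl⟩, ?_⟩
      rcases hj with hj | hj
      · have h1 : x₁ j ∈ (fun g => g j) '' X₁ := ⟨x₁, hx₁, rfl⟩
        rw [hX₁ j hj] at h1
        rw [Set.mem_singleton_iff] at h1; simp [commutatorElement_def, h1]
      · have h1 : x₂ j ∈ (fun g => g j) '' X₂ := ⟨x₂, hx₂, rfl⟩
        rw [hX₂ j hj] at h1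
        rw [Set.mem_singleton_iff] at h1; simp [commutatorElement_def, h1]
end

section
/- Let G = G_A × G_{NA} where G_A is a finite abelian group and G_{NA} is a finite group in which every element is a commutator (e.g. a product of nonabelian finite simple groups). Let S be a symmetric generating set of G containing the identity, and suppose the projection of S^{d_A} to G_A is all of G_A and the projection of S^{d_{NA}} to G_{NA} is all of G_{NA}. Then S^{d_A + 4·d_{NA}} = G. -/
/-!
Write `g = (a, b)` and pick `x ∈ S ^ dA` over `a`. For `y, z ∈ S ^ dNA` the commutator `⁅y, z⁆`
lies in `S ^ (4 * dNA)` by symmetry of `S`, vanishes in the abelian factor, and its second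
coordinate `⁅y.2, z.2⁆` can be any element of `B`, in particular `x.2⁻¹ * b`.
Then `x * ⁅y, z⁆ = g`.
-/

open Pointwise
open scoped commutatorElement

lemma Set.commutatorElement_mem_pow_four {G : Type*} [Group G] {X : Set G} (hX : X⁻¹ = X)
    {x y : G} (hx : x ∈ X) (hy : y ∈ X) : ⁅x, y⁆ ∈ X ^ 4 := by
  have hx' : x⁻¹ ∈ X := hX ▸ Set.inv_mem_inv.mpr hx
  have hy' : y⁻¹ ∈ X := hX ▸ Set.inv_mem_inv.mpr hy
  rw [commutatorElement_def, pow_succ, pow_succ, pow_succ, pow_one]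
  exact Set.mul_mem_mul (Set.mul_mem_mul (Set.mul_mem_mul hx hy) hx') hy'

lemma Prod.commutatorElement_eq_of_commGroup_fst {A B : Type*} [CommGroup A] [Group B]
    (u v : A × B) : ⁅u, v⁆ = (1, ⁅u.2, v.2⁆) :=
  Prod.ext
    ((map_commutatorElement (MonoidHom.fst A B) u v).trans
      (commutatorElement_eq_one_iff_commute.mpr (Commute.all _ _)))
    (map_commutatorElement (MonoidHom.snd A B) u v)

lemma Prod.exists_mul_commutatorElement_eq {A B : Type*} [CommGroup A] [Group B]
    (hB : ∀ b : B, ∃ x y : B, b = ⁅x, y⁆) {X Y : Set (A × B)}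
    (hX : Prod.fst '' X = Set.univ) (hY : Prod.snd '' Y = Set.univ) (g : A × B) :
    ∃ x ∈ X, ∃ y ∈ Y, ∃ z ∈ Y, x * ⁅y, z⁆ = g := by
  obtain ⟨x, hx, hxg⟩ := hX.symm ▸ Set.mem_univ g.1
  obtain ⟨b₁, b₂, hb⟩ := hB (x.2⁻¹ * g.2)
  obtain ⟨y, hy, rfl⟩ := hY.symm ▸ Set.mem_univ b₁
  obtain ⟨z, hz, rfl⟩ := hY.symm ▸ Set.mem_univ b₂
  refine ⟨x, hx, y, hy, z, hz, Prod.ext ?_ ?_⟩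
  · simp [Prod.commutatorElement_eq_of_commGroup_fst, hxg]
  · simp [Prod.commutatorElement_eq_of_commGroup_fst, ← hb]

theorem mixed_product_diameter_general {A B : Type*} [CommGroup A] [Group B]
    (hOre : ∀ b : B, ∃ x y : B, b = ⁅x, y⁆)
    (S : Set (A × B)) (hsymm : S⁻¹ = S) (dA dNA : ℕ)
    (hA : Prod.fst '' (S ^ dA) = Set.univ) (hB : Prod.snd '' (S ^ dNA) = Set.univ) :
    S ^ (dA + 4 * dNA) = Set.univ := by
  have hsymm' : (S ^ dNA)⁻¹ = S ^ dNA := by rw [← inv_pow, hsymm]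
  refine Set.eq_univ_of_forall fun g => ?_
  obtain ⟨x, hx, y, hy, z, hz, rfl⟩ := Prod.exists_mul_commutatorElement_eq hOre hA hB g
  rw [pow_add, pow_mul']
  exact Set.mul_mem_mul hx (Set.commutatorElement_mem_pow_four hsymm' hy hz)

/-- If `G = G_A × G_NA` with `G_A` finite abelian and every element of the finite group
`G_NA` a commutator, and `S` is a symmetric generating set of `G` containing `1` whose
`d_A`-th power projects onto `G_A` and whose `d_NA`-th power projects onto `G_NA`,
then `S^(d_A + 4·d_NA) = G`. -/
theorem mixed_product_diameter {A B : Type*} [CommGroup A] [Finite A] [Group B] [Finite B]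
    (hOre : ∀ b : B, ∃ x y : B, b = ⁅x, y⁆)
    (S : Set (A × B)) (h1 : (1 : A × B) ∈ S) (hsymm : S⁻¹ = S)
    (hgen : Subgroup.closure S = ⊤) (dA dNA : ℕ)
    (hA : Prod.fst '' (S ^ dA) = Set.univ) (hB : Prod.snd '' (S ^ dNA) = Set.univ) :
    S ^ (dA + 4 * dNA) = Set.univ :=
  mixed_product_diameter_general hOre S hsymm dA dNA hA hB
end
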